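/- arXiv:1712.07831 — 7 statements merged into one kernel-verified Lean document; each statement's English description precedes it below -/
import Mathlib

section
/- Let λ ∈ K with λ^q + λ = 0 and λ ∉ {0, 1}. Then for all x ∈ K: (x + λ(x-1))^{q+1} - (1 + λ(x-1))^{q+1} = x^{q+1} - 1. Equivalently, x^{q+1} - 1 - (x + λ(x-1))^{q+1} + (1 + λ(x-1))^{q+1} = 0. -/
theorem stmt4 (K : Type*) [Field K] (p n : ℕ) (hp : p.Prime) [CharP K p]
    (hn : 0 < n) (q : ℕ) (hq : q = p ^ n)
    (l : K) (hl : l ^ q + l = 0) (hl0 : l ≠ 0) (hl1 : l ≠ 1) :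
    ∀ x : K, (x + l * (x - 1)) ^ (q + 1) - (1 + l * (x - 1)) ^ (q + 1)
      = x ^ (q + 1) - 1 := by
  intro x
  have : Fact p.Prime := ⟨hp⟩
  subst hq
  have hlq : l ^ p ^ n = -l := by linear_combination hl
  have hfrob : ∀ a b : K, (a + b) ^ p ^ n = a ^ p ^ n + b ^ p ^ n := fun a b =>
    add_pow_char_pow a b p n
  have hsub : (x - 1) ^ p ^ n = x ^ p ^ n - 1 := by
    simpa using sub_pow_char_pow x 1 n
  have h1 : (x + l * (x - 1)) ^ p ^ n = x ^ p ^ n - l * (x ^ p ^ n - 1) := by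
    rw [hfrob, mul_pow, hlq, hsub]; ring
  have h2 : (1 + l * (x - 1)) ^ p ^ n = 1 - l * (x ^ p ^ n - 1) := by
    rw [hfrob, mul_pow, hlq, hsub]; ring
  rw [pow_succ, pow_succ, pow_succ, h1, h2]
  ring
end

section
/- Let λ ∈ K with λ^q + λ = 0, λ ∉ {0,1}, m | q+1, s = (q+1)/m. If y^m = x^{q+1} - 1 and 1 + λ(x-1) ≠ 0, then setting X = (x + λ(x-1))/(1 + λ(x-1)) and Y = y/(1 + λ(x-1))^s, one has Y^m = X^{q+1} - 1. -/
theorem stmt5 (K : Type*) [Field K] (p n : ℕ) (hp : p.Prime) [CharP K p]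
    (hn : 0 < n) (q m s : ℕ) (hq : q = p ^ n) (hms : m * s = q + 1)
    (l : K) (hl : l ^ q + l = 0) (hl0 : l ≠ 0) (hl1 : l ≠ 1)
    (x y : K) (h : y ^ m = x ^ (q + 1) - 1) (hd : 1 + l * (x - 1) ≠ 0) :
    (y / (1 + l * (x - 1)) ^ s) ^ m
      = ((x + l * (x - 1)) / (1 + l * (x - 1))) ^ (q + 1) - 1 := by
  have hF : Fact p.Prime := ⟨hp⟩
  have hlq : l ^ q = -l := by linear_combination hl
  have hx1 : (x - 1) ^ q = x ^ q - 1 := by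
    subst hq
    rw [sub_pow_char_pow, one_pow]
  have hN : (x + l * (x - 1)) ^ q = x ^ q - l * (x ^ q - 1) := by
    subst hq
    rw [add_pow_char_pow, mul_pow, hx1, hlq, neg_mul]
    ring
  have hD : (1 + l * (x - 1)) ^ q = 1 - l * (x ^ q - 1) := by
    subst hq
    rw [add_pow_char_pow, mul_pow, hx1, hlq, one_pow, neg_mul]
    ring
  have key : (x + l * (x - 1)) ^ (q + 1) - (1 + l * (x - 1)) ^ (q + 1)
      = x ^ (q + 1) - 1 := by
    rw [pow_succ, pow_succ, pow_succ, hN, hD]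
    ring
  have hdq : (1 + l * (x - 1)) ^ (q + 1) ≠ 0 := pow_ne_zero _ hd
  rw [div_pow, div_pow, ← pow_mul, mul_comm s m, hms, h]
  rw [eq_sub_iff_add_eq, div_add' _ _ _ hdq, div_eq_div_iff hdq hdq]
  rw [← key]
  ring
end

section
/- Let K be a field of characteristic p > 0, q = p^n, r ≥ 2, and b ∈ K nonzero with b = (-1)^{r-1} b^{q^{2r}}. Define g_b(y) = Σ_{i=0}^{r-1} (-1)^i b^{q^{i+r}} y^{q^i}. Then for all y ∈ K: (g_b(y))^q + g_b(y) = b·y^{q^r} + b^{q^r}·y. -/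
noncomputable def gb (K : Type*) [Field K] (q r : ℕ) (b : K) (y : K) : K :=
  ∑ i ∈ Finset.range r, (-1 : K) ^ i * b ^ (q ^ (i + r)) * y ^ (q ^ i)

theorem stmt7 (K : Type*) [Field K] (p n r : ℕ) (hp : p.Prime) [CharP K p]
    (hn : 0 < n) (hr : 2 ≤ r) (q : ℕ) (hq : q = p ^ n)
    (b : K) (hb0 : b ≠ 0) (hb : b = (-1) ^ (r - 1) * b ^ (q ^ (2 * r))) :
    ∀ y : K, (gb K q r b y) ^ q + gb K q r b y
      = b * y ^ (q ^ r) + b ^ (q ^ r) * y := by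
  intro y
  haveI : Fact p.Prime := ⟨hp⟩
  set h : ℕ → K := fun j => (-1 : K) ^ j * b ^ (q ^ (j + r)) * y ^ (q ^ j) with hh
  have hneg : ((-1 : K)) ^ q = -1 := by
    rw [hq, ← iterateFrobenius_def]
    simp
  have hterm : ∀ i, ((-1 : K) ^ i * b ^ (q ^ (i + r)) * y ^ (q ^ i)) ^ q = -h (i + 1) := by
    intro i
    have e1 : (((-1 : K)) ^ i) ^ q = (-1 : K) ^ i := by
      rw [← pow_mul, mul_comm, pow_mul, hneg]
    have e2 : (b ^ (q ^ (i + r))) ^ q = b ^ (q ^ (i + 1 + r)) := by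
      rw [← pow_mul, ← pow_succ]
      ring_nf
    have e3 : (y ^ (q ^ i)) ^ q = y ^ (q ^ (i + 1)) := by
      rw [← pow_mul, ← pow_succ]
    rw [mul_pow, mul_pow, e1, e2, e3]
    simp only [hh, pow_succ]
    ring
  have hpow : (gb K q r b y) ^ q = -∑ i ∈ Finset.range r, h (i + 1) := by
    rw [gb, hq, sum_pow_char_pow, ← hq]
    rw [Finset.sum_congr rfl fun i _ => hterm i, Finset.sum_neg_distrib]
  have hshift : ∑ i ∈ Finset.range r, h (i + 1)
      = ∑ i ∈ Finset.range r, h i + h r - h 0 := by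
    have h1 := Finset.sum_range_succ h r
    have h2 := Finset.sum_range_succ' h r
    rw [h1] at h2
    linear_combination -h2
  have hgb : gb K q r b y = ∑ i ∈ Finset.range r, h i := rfl
  rw [hpow, hgb, hshift]
  have hrK : (-1 : K) ^ r = -(-1 : K) ^ (r - 1) := by
    have hr1 : r - 1 + 1 = r := by omega
    conv_lhs => rw [← hr1]
    rw [pow_succ]; ring
  have h0 : h 0 = b ^ (q ^ r) * y := by simp [hh]
  have hrv : h r = -(b * y ^ (q ^ r)) := by
    simp only [hh, hrK, two_mul] at hb ⊢
    linear_combination (y ^ q ^ r) * hb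
  rw [h0, hrv]; ring
end

section
/- Let K be a field of characteristic p > 0, q = p^n, r ≥ 2. Let b, c ∈ K with b ≠ 0, b = (-1)^{r-1} b^{q^{2r}}, and c^q + c = b^{q^r+1}. If x, y ∈ K satisfy y^{q^r+1} = x^q + x, then setting X = g_b(y) + c + x and Y = y + b, one has Y^{q^r+1} = X^q + X. That is, the map γ(x,y) = (g_b(y) + c + x, y + b) maps the curve G_r : y^{q^r+1} = x^q + x to itself. -/
section Frobenius

variable {K : Type*} [Field K] {p : ℕ} [ExpChar K p]

theorem gb_pow_add_gb (n r : ℕ) (b y : K) :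
    gb K (p ^ n) r b y ^ p ^ n + gb K (p ^ n) r b y
      = b ^ (p ^ n) ^ r * y - (-1) ^ r * b ^ (p ^ n) ^ (2 * r) * y ^ (p ^ n) ^ r := by
  set t : ℕ → K := fun i ↦ (-1 : K) ^ i * b ^ (p ^ n) ^ (i + r) * y ^ (p ^ n) ^ i with ht_def
  have ht : ∀ i, t i ^ p ^ n = -t (i + 1) := fun i ↦ by
    simp only [ht_def, mul_pow, ← pow_mul, pow_right_comm (-1 : K) i,
      neg_one_pow_expChar_pow, pow_succ, add_right_comm i 1 r]
    ring
  have hgb : gb K (p ^ n) r b y = ∑ i ∈ Finset.range r, t i := rfl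
  rw [hgb, sum_pow_char_pow, Finset.sum_congr rfl fun i _ ↦ ht i, Finset.sum_neg_distrib,
    neg_add_eq_sub, ← Finset.sum_sub_distrib, Finset.sum_range_sub', two_mul]
  simp [ht_def]

theorem gb_pow_add_gb_of_eq {n r : ℕ} (hr : r ≠ 0) {b : K}
    (hb : b = (-1) ^ (r - 1) * b ^ (p ^ n) ^ (2 * r)) (y : K) :
    gb K (p ^ n) r b y ^ p ^ n + gb K (p ^ n) r b y
      = b ^ (p ^ n) ^ r * y + b * y ^ (p ^ n) ^ r := by
  obtain ⟨s, rfl⟩ : ∃ s, r = s + 1 := ⟨r - 1, by omega⟩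
  rw [Nat.add_sub_cancel] at hb
  rw [gb_pow_add_gb]
  linear_combination -y ^ (p ^ n) ^ (s + 1) * hb

end Frobenius

theorem stmt9_general (K : Type*) [Field K] (p n r : ℕ) (hp : p.Prime) [CharP K p]
    (hr : 2 ≤ r) (q : ℕ) (hq : q = p ^ n)
    (b c : K) (hb : b = (-1) ^ (r - 1) * b ^ (q ^ (2 * r)))
    (hc : c ^ q + c = b ^ (q ^ r + 1))
    (x y : K) (h : y ^ (q ^ r + 1) = x ^ q + x) :
    (y + b) ^ (q ^ r + 1)
      = (gb K q r b y + c + x) ^ q + (gb K q r b y + c + x) := by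
  have : Fact p.Prime := ⟨hp⟩
  subst hq
  have hg := gb_pow_add_gb_of_eq (by omega) hb y
  rw [pow_succ, ← pow_mul, add_pow_char_pow, add_pow_char_pow, add_pow_char_pow]
  linear_combination h - hg - hc

theorem stmt9 (K : Type*) [Field K] (p n r : ℕ) (hp : p.Prime) [CharP K p]
    (hn : 0 < n) (hr : 2 ≤ r) (q : ℕ) (hq : q = p ^ n)
    (b c : K) (hb0 : b ≠ 0) (hb : b = (-1) ^ (r - 1) * b ^ (q ^ (2 * r)))
    (hc : c ^ q + c = b ^ (q ^ r + 1))
    (x y : K) (h : y ^ (q ^ r + 1) = x ^ q + x) :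
    (y + b) ^ (q ^ r + 1)
      = (gb K q r b y + c + x) ^ q + (gb K q r b y + c + x) :=
  stmt9_general K p n r hp hr q hq b c hb hc x y h
end

section
/- With the hypotheses above (b ≠ 0, b = (-1)^{r-1} b^{q^{2r}}, c^q + c = b^{q^r+1}), the map γ(x,y) = (g_b(y) + c + x, y + b) on the curve y^{q^r+1} = x^q + x has inverse γ^{-1}(x,y) = (-g_b(y) + c' + x, y - b) where c' = -c + g_b(b): i.e., γ^{-1}(γ(x,y)) = (x,y) for all (x,y). -/
lemma gb_add (K : Type*) [Field K] (p n r : ℕ) (hp : p.Prime) [CharP K p]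
    (q : ℕ) (hq : q = p ^ n) (b u v : K) :
    gb K q r b (u + v) = gb K q r b u + gb K q r b v := by
  haveI := hp.one_lt
  haveI : Fact p.Prime := ⟨hp⟩
  unfold gb
  rw [← Finset.sum_add_distrib]
  refine Finset.sum_congr rfl fun i _ => ?_
  have : (u + v) ^ q ^ i = u ^ q ^ i + v ^ q ^ i := by
    rw [hq, ← pow_mul, add_pow_char_pow]
  rw [this]; ring

theorem stmt10 (K : Type*) [Field K] (p n r : ℕ) (hp : p.Prime) [CharP K p]
    (hn : 0 < n) (hr : 2 ≤ r) (q : ℕ) (hq : q = p ^ n)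
    (b c : K) (hb0 : b ≠ 0) (hb : b = (-1) ^ (r - 1) * b ^ (q ^ (2 * r)))
    (hc : c ^ q + c = b ^ (q ^ r + 1)) (x y : K) :
    (-gb K q r b (y + b) + (-c + gb K q r b b) + (gb K q r b y + c + x) = x) ∧
    ((y + b) - b = y) := by
  refine ⟨?_, by ring⟩
  rw [gb_add K p n r hp q hq]
  ring
end

section
/- Let K be algebraically closed of characteristic p > 0, q = p^n, m | q+1, s = (q+1)/m, λ ∈ K with λ^q + λ = 0 and λ ∉ {0,1}, and ω ∈ K with ω^m + 1 = 0. Let P = (0, ω) ∈ E_m and β(P) = (λ/(λ-1), ω/(1-λ)^s). Then β(P) lies on E_m (i.e., (ω/(1-λ)^s)^m = (λ/(λ-1))^{q+1} - 1), and for every ζ with ζ^{q+1} = 1 and ζ ≠ 1, the point (ζ·λ/(λ-1), ω/(1-λ)^s) differs from β(P), since λ/(λ-1) ≠ 0. -/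
theorem stmt13 (K : Type*) [Field K] [IsAlgClosed K] (p n : ℕ) (hp : p.Prime)
    [CharP K p] (hn : 0 < n) (q m s : ℕ) (hq : q = p ^ n) (hms : m * s = q + 1)
    (l : K) (hl : l ^ q + l = 0) (hl0 : l ≠ 0) (hl1 : l ≠ 1)
    (w : K) (hw : w ^ m + 1 = 0) :
    (w / (1 - l) ^ s) ^ m = (l / (l - 1)) ^ (q + 1) - 1 ∧
    l / (l - 1) ≠ 0 ∧
    (∀ z : K, z ^ (q + 1) = 1 → z ≠ 1 →
      (z * (l / (l - 1)), w / (1 - l) ^ s) ≠ (l / (l - 1), w / (1 - l) ^ s)) := by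
  haveI := Fact.mk hp
  have hlm1 : l - 1 ≠ 0 := sub_ne_zero.mpr hl1
  have h1l : (1 : K) - l ≠ 0 := sub_ne_zero.mpr fun h => hl1 h.symm
  have hlq : l ^ q = -l := eq_neg_of_add_eq_zero_left hl
  have hwm : w ^ m = -1 := eq_neg_of_add_eq_zero_left hw
  have hln1 : l ≠ -1 := by
    intro h
    rcases eq_or_ne p 2 with h2 | h2
    · have h2K : (2 : K) = 0 := by
        have := CharP.cast_eq_zero K p
        rw [h2] at this
        exact_mod_cast this
      exact hl1 (by rw [h]; linear_combination -h2K)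
    · have hq2 : ((-1 : K)) ^ q = -1 := by
        rw [hq]; exact neg_one_pow_char_pow K p n
      rw [h, hq2] at hl
      have h20 : (2 : K) ≠ 0 := by
        intro hc
        have : (p : ℕ) ∣ 2 := (CharP.cast_eq_zero_iff K p 2).mp (by exact_mod_cast hc)
        exact h2 ((Nat.prime_dvd_prime_iff_eq hp Nat.prime_two).mp this)
      exact h20 (by linear_combination -hl)
  have h1pl : (1 : K) + l ≠ 0 := fun h => hln1 (by linear_combination h)
  have hd : (1 : K) - l ^ 2 ≠ 0 := by
    have : (1 : K) - l ^ 2 = (1 - l) * (1 + l) := by ring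
    rw [this]; exact mul_ne_zero h1l h1pl
  have hsub : (l - 1) ^ q = l ^ q - 1 := by
    rw [hq, sub_pow_char_pow, one_pow]
  have ha : (l - 1) ^ (q + 1) = 1 - l ^ 2 := by
    rw [pow_succ, hsub, hlq]; ring
  have hb : (1 - l) ^ (q + 1) = 1 - l ^ 2 := by
    have : (1 - l) ^ q = 1 - l ^ q := by
      rw [hq, sub_pow_char_pow, one_pow]
    rw [pow_succ, this, hlq]; ring
  have hc : l ^ (q + 1) = -l ^ 2 := by rw [pow_succ, hlq]; ring
  have hA : l / (l - 1) ≠ 0 := div_ne_zero hl0 hlm1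
  refine ⟨?_, hA, ?_⟩
  · rw [div_pow, div_pow, ← pow_mul, mul_comm s m, hms, hb, hwm, hc, ha]
    field_simp
    ring
  · intro z hz hz1 h
    have h1 := (Prod.mk.injEq _ _ _ _).mp h |>.1
    exact hz1 (mul_right_cancel₀ hA (by rw [h1, one_mul]))
end

section
/- Let K be algebraically closed of characteristic p > 0, q = p^n, r ≥ 2, b, c as in the definition of γ (b ≠ 0, b = (-1)^{r-1}b^{q^{2r}}, c^q + c = b^{q^r+1}). Let α ∈ K with α^q + α = 0 and R = (α, 0) ∈ G_r. Then γ(R) = (c + α, b), and for every ζ ∈ K with ζ^{q^r+1} = 1 and ζ ≠ 1, σ_ζ(γ(R)) = (c + α, ζb) ≠ γ(R). Hence no nontrivial σ_ζ fixes γ(R). -/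
theorem stmt16 (K : Type*) [Field K] [IsAlgClosed K] (p n r : ℕ) (hp : p.Prime)
    [CharP K p] (hn : 0 < n) (hr : 2 ≤ r) (q : ℕ) (hq : q = p ^ n)
    (b c : K) (hb0 : b ≠ 0) (hb : b = (-1) ^ (r - 1) * b ^ (q ^ (2 * r)))
    (hc : c ^ q + c = b ^ (q ^ r + 1))
    (a : K) (ha : a ^ q + a = 0) :
    (gb K q r b 0 + c + a, (0 : K) + b) = (c + a, b) ∧
    (∀ z : K, z ^ (q ^ r + 1) = 1 → z ≠ 1 → (c + a, z * b) ≠ (c + a, b)) := by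
  have hq2 : 2 ≤ q := hq ▸ hp.two_le.trans (Nat.le_self_pow hn.ne' p)
  constructor
  · have : gb K q r b 0 = 0 := by
      unfold gb
      apply Finset.sum_eq_zero
      intro i _
      rw [zero_pow (by positivity), mul_zero]
    rw [this, zero_add, zero_add]
  · intro z _ hz1 h
    apply hz1
    have := (Prod.mk.injEq _ _ _ _).mp h |>.2
    field_simp at this
    exact this
end
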